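/- Suppose in addition that σ is not identically zero. Then for every k > max{ 2C₁/‖σ‖_{L¹(B₁)}, 1 }, one has the L¹ stability estimate ‖σ‖_{L¹(B₁)} ≤ (2n²/|β_d|²) k^{4n+m−d−1} M_PL(k). -/

import Mathlib

open MeasureTheory

noncomputable section

/-- `ℝ^d` with the Euclidean structure. -/
abbrev Ed (d : ℕ) := EuclideanSpace ℝ (Fin d)

/-- `β_d = e^{iπ/4}/√(8π)` for `d = 2` and `β_d = 1/(4π)` otherwise (`d = 3`). -/
def betaD (d : ℕ) : ℂ :=
  if d = 2 then Complex.exp (Complex.I * Real.pi / 4) / (Real.sqrt (8 * Real.pi) : ℝ)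
  else 1 / (4 * (Real.pi : ℂ))

/-- Fourier transform `σ̂(γ) = ∫_{ℝ^d} σ(z) e^{-iγ·z} dz` of a real-valued function. -/
def sigmaHat (d : ℕ) (σ : Ed d → ℝ) (γ : Ed d) : ℂ :=
  ∫ z, (σ z : ℂ) * Complex.exp (-Complex.I * ((inner ℝ γ z : ℝ) : ℂ))

/-- Correlation of far-field patterns of the stochastic polyharmonic wave equation:
`F_PL(x̂,ŷ,k) = (β_d²/n²) k^{d+1−4n} (k^{−m} σ̂(k(x̂+ŷ)) + ∫_{B₁} r(z,−kŷ) e^{−ik(x̂+ŷ)·z} dz)`. -/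
def FPL (d n : ℕ) (m : ℝ) (σ : Ed d → ℝ) (r : Ed d → Ed d → ℂ) (k : ℝ)
    (x y : Ed d) : ℂ :=
  (betaD d) ^ 2 / (n : ℂ) ^ 2 * ((k ^ ((d : ℝ) + 1 - 4 * (n : ℝ)) : ℝ) : ℂ) *
    (((k ^ (-m) : ℝ) : ℂ) * sigmaHat d σ (k • (x + y)) +
      ∫ z in Metric.ball (0 : Ed d) 1,
        r z (-(k • y)) * Complex.exp (-Complex.I * ((inner ℝ (k • (x + y)) z : ℝ) : ℂ)))

/-- `M_PL(k) = sup_{x̂,ŷ ∈ S^{d−1}} |F_PL(x̂,ŷ,k)|`. -/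
def MPL (d n : ℕ) (m : ℝ) (σ : Ed d → ℝ) (r : Ed d → Ed d → ℂ) (k : ℝ) : ℝ :=
  sSup {v : ℝ | ∃ x y : Ed d, ‖x‖ = 1 ∧ ‖y‖ = 1 ∧ v = ‖FPL d n m σ r k x y‖}

end

/-!
Take `ŷ = -x̂`: then `k(x̂ + ŷ) = 0`, so the leading term of `F_PL` is `k^{-m} σ̂(0) = k^{-m} ‖σ‖₁`,
while the remainder term is at most `C₁ k^{-m-1}`. For `k > 2C₁/‖σ‖₁` the remainder is less than
half of the leading term, so `M_PL(k) ≥ |F_PL(x̂,-x̂,k)| ≥ (|β_d|²/2n²) k^{d+1-4n-m} ‖σ‖₁`.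
-/

open Complex

lemma betaD_ne_zero (d : ℕ) : betaD d ≠ 0 := by
  unfold betaD
  split
  · exact div_ne_zero (exp_ne_zero _) (ofReal_ne_zero.2 (by positivity))
  · exact div_ne_zero one_ne_zero (mul_ne_zero (by norm_num) (ofReal_ne_zero.2 Real.pi_ne_zero))

lemma norm_exp_neg_I_mul_ofReal (t : ℝ) : ‖exp (-I * t)‖ = 1 := by
  simpa using norm_exp_I_mul_ofReal (-t)

lemma norm_integral_mul_exp_neg_I_le {α : Type*} [MeasurableSpace α] (μ : Measure α)
    (f : α → ℂ) (φ : α → ℝ) : ‖∫ z, f z * exp (-I * φ z) ∂μ‖ ≤ ∫ z, ‖f z‖ ∂μ :=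
  (norm_integral_le_integral_norm _).trans_eq <| by
    simp only [norm_mul, norm_exp_neg_I_mul_ofReal, mul_one]

section FarField

variable {d n : ℕ} {m C₁ k : ℝ} {σ : Ed d → ℝ} {r : Ed d → Ed d → ℂ}

/-- The remainder term `∫_{B₁} r(z,−kŷ) e^{−ik(x̂+ŷ)·z} dz` of `F_PL`. -/
noncomputable def farFieldRemainder (d : ℕ) (r : Ed d → Ed d → ℂ) (k : ℝ) (x y : Ed d) : ℂ :=
  ∫ z in Metric.ball (0 : Ed d) 1,
    r z (-(k • y)) * exp (-I * ((inner ℝ (k • (x + y)) z : ℝ) : ℂ))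

lemma FPL_eq (x y : Ed d) :
    FPL d n m σ r k x y = betaD d ^ 2 / (n : ℂ) ^ 2 * ((k ^ ((d : ℝ) + 1 - 4 * n) : ℝ) : ℂ) *
      (((k ^ (-m) : ℝ) : ℂ) * sigmaHat d σ (k • (x + y)) + farFieldRemainder d r k x y) :=
  rfl

lemma norm_FPL_prefactor (hk : 0 ≤ k) :
    ‖betaD d ^ 2 / (n : ℂ) ^ 2 * ((k ^ ((d : ℝ) + 1 - 4 * n) : ℝ) : ℂ)‖ =
      ‖betaD d‖ ^ 2 / n ^ 2 * k ^ ((d : ℝ) + 1 - 4 * n) := by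
  rw [norm_mul, norm_div, norm_pow, norm_pow, norm_natCast, norm_real,
    Real.norm_of_nonneg (Real.rpow_nonneg hk _)]

lemma sigmaHat_zero : sigmaHat d σ 0 = ∫ z, (σ z : ℂ) := by
  simp [sigmaHat]

lemma norm_sigmaHat_le (hσ_nn : ∀ z, 0 ≤ σ z) (γ : Ed d) :
    ‖sigmaHat d σ γ‖ ≤ ∫ z, σ z :=
  (norm_integral_mul_exp_neg_I_le _ _ _).trans_eq <| by
    simp only [norm_real, Real.norm_of_nonneg (hσ_nn _)]

lemma norm_farFieldRemainder_le
    (hr_bd : ∀ ξ : Ed d, 1 < ‖ξ‖ →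
      (∫ z in Metric.ball (0 : Ed d) 1, ‖r z ξ‖) ≤ C₁ * ‖ξ‖ ^ (-(m + 1)))
    (hk : 1 < k) (x : Ed d) {y : Ed d} (hy : ‖y‖ = 1) :
    ‖farFieldRemainder d r k x y‖ ≤ C₁ * k ^ (-(m + 1)) := by
  have hky : ‖-(k • y)‖ = k := by
    rw [norm_neg, norm_smul, hy, mul_one, Real.norm_of_nonneg (by linarith)]
  calc ‖farFieldRemainder d r k x y‖ ≤ ∫ z in Metric.ball (0 : Ed d) 1, ‖r z (-(k • y))‖ :=
        norm_integral_mul_exp_neg_I_le _ _ _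
    _ ≤ C₁ * ‖-(k • y)‖ ^ (-(m + 1)) := hr_bd _ (by rwa [hky])
    _ = C₁ * k ^ (-(m + 1)) := by rw [hky]

lemma norm_FPL_le (hσ_nn : ∀ z, 0 ≤ σ z)
    (hr_bd : ∀ ξ : Ed d, 1 < ‖ξ‖ →
      (∫ z in Metric.ball (0 : Ed d) 1, ‖r z ξ‖) ≤ C₁ * ‖ξ‖ ^ (-(m + 1)))
    (hk : 1 < k) (x : Ed d) {y : Ed d} (hy : ‖y‖ = 1) :
    ‖FPL d n m σ r k x y‖ ≤ ‖betaD d‖ ^ 2 / n ^ 2 * k ^ ((d : ℝ) + 1 - 4 * n) *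
      (k ^ (-m) * (∫ z, σ z) + C₁ * k ^ (-(m + 1))) := by
  have hk0 : 0 ≤ k := by linarith
  rw [FPL_eq, norm_mul, norm_FPL_prefactor hk0]
  gcongr
  refine (norm_add_le _ _).trans (add_le_add ?_ (norm_farFieldRemainder_le hr_bd hk x hy))
  rw [norm_mul, norm_real, Real.norm_of_nonneg (Real.rpow_nonneg hk0 _)]
  gcongr
  exact norm_sigmaHat_le hσ_nn _

lemma norm_FPL_le_MPL (hσ_nn : ∀ z, 0 ≤ σ z)
    (hr_bd : ∀ ξ : Ed d, 1 < ‖ξ‖ →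
      (∫ z in Metric.ball (0 : Ed d) 1, ‖r z ξ‖) ≤ C₁ * ‖ξ‖ ^ (-(m + 1)))
    (hk : 1 < k) {x y : Ed d} (hx : ‖x‖ = 1) (hy : ‖y‖ = 1) :
    ‖FPL d n m σ r k x y‖ ≤ MPL d n m σ r k := by
  refine le_csSup ⟨‖betaD d‖ ^ 2 / n ^ 2 * k ^ ((d : ℝ) + 1 - 4 * n) *
    (k ^ (-m) * (∫ z, σ z) + C₁ * k ^ (-(m + 1))), ?_⟩ ⟨x, y, hx, hy, rfl⟩
  rintro v ⟨x', y', -, hy', rfl⟩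
  exact norm_FPL_le hσ_nn hr_bd hk x' hy'

lemma rpow_neg_add_one_mul_le_half (hk : 0 < k) {S : ℝ} (hkS : 2 * C₁ < k * S) :
    C₁ * k ^ (-(m + 1)) ≤ k ^ (-m) * S / 2 := by
  have hC₁ : C₁ * k⁻¹ ≤ S / 2 := by
    rw [← div_eq_mul_inv, div_le_iff₀ hk]
    linarith
  calc C₁ * k ^ (-(m + 1)) = C₁ * k⁻¹ * k ^ (-m) := by
        rw [neg_add, Real.rpow_add hk, Real.rpow_neg_one]; ring
    _ ≤ S / 2 * k ^ (-m) := by gcongr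
    _ = k ^ (-m) * S / 2 := by ring

/-- At antipodal directions the Fourier transform is evaluated at `0`, where it is `‖σ‖₁`. -/
lemma norm_FPL_neg_ge (hσ_nn : ∀ z, 0 ≤ σ z)
    (hσ_supp : ∀ z ∉ Metric.ball (0 : Ed d) 1, σ z = 0)
    (hr_bd : ∀ ξ : Ed d, 1 < ‖ξ‖ →
      (∫ z in Metric.ball (0 : Ed d) 1, ‖r z ξ‖) ≤ C₁ * ‖ξ‖ ^ (-(m + 1)))
    (hk : 1 < k) (hkS : 2 * C₁ < k * ∫ z in Metric.ball (0 : Ed d) 1, σ z)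
    {e : Ed d} (he : ‖e‖ = 1) :
    ‖betaD d‖ ^ 2 / n ^ 2 * k ^ ((d : ℝ) + 1 - 4 * n) *
        (k ^ (-m) * (∫ z in Metric.ball (0 : Ed d) 1, σ z) / 2) ≤
      ‖FPL d n m σ r k e (-e)‖ := by
  set S := ∫ z in Metric.ball (0 : Ed d) 1, σ z
  have hk0 : 0 < k := by linarith
  have hσ_hat : sigmaHat d σ (k • (e + -e)) = (S : ℂ) := by
    rw [add_neg_cancel, smul_zero, sigmaHat_zero, integral_complex_ofReal,
      ← setIntegral_eq_integral_of_forall_compl_eq_zero hσ_supp]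
  have hR := (norm_farFieldRemainder_le hr_bd hk e (norm_neg e ▸ he)).trans
    (rpow_neg_add_one_mul_le_half hk0 hkS)
  have hS0 : 0 ≤ S := setIntegral_nonneg measurableSet_ball fun z _ => hσ_nn z
  rw [FPL_eq, hσ_hat, norm_mul, norm_FPL_prefactor hk0.le]
  gcongr
  have hlead : ‖((k ^ (-m) : ℝ) : ℂ) * (S : ℂ)‖ = k ^ (-m) * S := by
    rw [← ofReal_mul, norm_real, Real.norm_of_nonneg (by positivity)]
  have := norm_sub_norm_le (((k ^ (-m) : ℝ) : ℂ) * (S : ℂ)) (-farFieldRemainder d r k e (-e))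
  rw [norm_neg, sub_neg_eq_add, hlead] at this
  linarith

end FarField

lemma le_of_FPL_prefactor_mul_le {d n β k m S M : ℝ} (hβ : 0 < β) (hn : 0 < n) (hk : 0 < k)
    (h : β ^ 2 / n ^ 2 * k ^ (d + 1 - 4 * n) * (k ^ (-m) * S / 2) ≤ M) :
    S ≤ 2 * n ^ 2 / β ^ 2 * k ^ (4 * n + m - d - 1) * M := by
  have hexp : k ^ (4 * n + m - d - 1) * (k ^ (d + 1 - 4 * n) * k ^ (-m)) = 1 := by
    rw [← Real.rpow_add hk, ← Real.rpow_add hk,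
      show 4 * n + m - d - 1 + (d + 1 - 4 * n + -m) = 0 by ring, Real.rpow_zero]
  calc S = 2 * n ^ 2 / β ^ 2 * (β ^ 2 / n ^ 2) / 2 *
        (k ^ (4 * n + m - d - 1) * (k ^ (d + 1 - 4 * n) * k ^ (-m))) * S := by
        rw [hexp]; field_simp
    _ = 2 * n ^ 2 / β ^ 2 * k ^ (4 * n + m - d - 1) *
        (β ^ 2 / n ^ 2 * k ^ (d + 1 - 4 * n) * (k ^ (-m) * S / 2)) := by ring
    _ ≤ _ := by gcongr

theorem statement5_general (d n : ℕ) (hd : d = 2 ∨ d = 3) (hn : 1 ≤ n) (m C₁ : ℝ)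
    (σ : Ed d → ℝ) (hσ_nn : ∀ z, 0 ≤ σ z)
    (hσ_supp : ∀ z ∉ Metric.ball (0 : Ed d) 1, σ z = 0)
    (r : Ed d → Ed d → ℂ)
    (hr_bd : ∀ ξ : Ed d, 1 < ‖ξ‖ →
      (∫ z in Metric.ball (0 : Ed d) 1, ‖r z ξ‖) ≤ C₁ * ‖ξ‖ ^ (-(m + 1)))
    (k : ℝ) (hk : max (2 * C₁ / ∫ z in Metric.ball (0 : Ed d) 1, σ z) 1 < k) :
    (∫ z in Metric.ball (0 : Ed d) 1, σ z) ≤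
      2 * (n : ℝ) ^ 2 / ‖betaD d‖ ^ 2 *
        k ^ (4 * (n : ℝ) + m - (d : ℝ) - 1) * MPL d n m σ r k := by
  set S := ∫ z in Metric.ball (0 : Ed d) 1, σ z
  have hk1 : 1 < k := (le_max_right _ _).trans_lt hk
  obtain ⟨e, he⟩ : ∃ e : Ed d, ‖e‖ = 1 := by
    have : NeZero d := ⟨by omega⟩
    exact exists_norm_eq _ zero_le_one
  have hM := norm_FPL_le_MPL (n := n) hσ_nn hr_bd hk1 he (norm_neg e ▸ he)
  have hS0 : 0 ≤ S := setIntegral_nonneg measurableSet_ball fun z _ => hσ_nn z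
  rcases hS0.eq_or_lt with hS_zero | hS_pos
  · have hM0 : 0 ≤ MPL d n m σ r k := (norm_nonneg _).trans hM
    rw [← hS_zero]
    positivity
  have hkS : 2 * C₁ < k * S := by
    have := (le_max_left _ _).trans_lt hk
    rwa [div_lt_iff₀ hS_pos] at this
  exact le_of_FPL_prefactor_mul_le (norm_pos_iff.2 (betaD_ne_zero d)) (by exact_mod_cast hn)
    (by linarith) ((norm_FPL_neg_ge hσ_nn hσ_supp hr_bd hk1 hkS he).trans hM)

/-- `L¹` stability, polyharmonic case. If moreover `σ` is not identically
zero, then for every `k > max{2C₁/‖σ‖_{L¹(B₁)}, 1}`,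
`‖σ‖_{L¹(B₁)} ≤ (2n²/|β_d|²) k^{4n+m−d−1} M_PL(k)`. -/
theorem statement5 (d n : ℕ) (hd : d = 2 ∨ d = 3) (hn : 1 ≤ n) (m C₁ : ℝ) (hC₁ : 0 < C₁)
    (σ : Ed d → ℝ) (hσ_int : Integrable σ) (hσ_nn : ∀ z, 0 ≤ σ z)
    (hσ_supp : ∀ z ∉ Metric.ball (0 : Ed d) 1, σ z = 0) (hσ_ne : σ ≠ 0)
    (r : Ed d → Ed d → ℂ) (hr_int : ∀ ξ, Integrable (fun z => r z ξ))
    (hr_supp : ∀ ξ : Ed d, ∀ z ∉ Metric.ball (0 : Ed d) 1, r z ξ = 0)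
    (hr_bd : ∀ ξ : Ed d, 1 < ‖ξ‖ →
      (∫ z in Metric.ball (0 : Ed d) 1, ‖r z ξ‖) ≤ C₁ * ‖ξ‖ ^ (-(m + 1)))
    (k : ℝ) (hk : max (2 * C₁ / ∫ z in Metric.ball (0 : Ed d) 1, σ z) 1 < k) :
    (∫ z in Metric.ball (0 : Ed d) 1, σ z) ≤
      2 * (n : ℝ) ^ 2 / ‖betaD d‖ ^ 2 *
        k ^ (4 * (n : ℝ) + m - (d : ℝ) - 1) * MPL d n m σ r k :=
  statement5_general d n hd hn m C₁ σ hσ_nn hσ_supp r hr_bd k hk
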